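/- Let T > 0, let h : ℝⁿ → ℝ be continuously differentiable, and let e : [0, T] → ℝⁿ be differentiable. Suppose α : ℝ → ℝ is locally Lipschitz, strictly increasing, and satisfies α(0) = 0, and suppose that for all t ∈ [0, T] the Lie-derivative condition ⟨∇h(e(t)), e'(t)⟩ ≥ −α(h(e(t))) holds. If e(0) belongs to the safe set 𝓔 = {e ∈ ℝⁿ : h(e) ≥ 0}, then e(t) ∈ 𝓔 for all t ∈ [0, T]. -/

import Mathlib

/-!
Along the trajectory, `y t = h (e t)` has derivative `⟪∇h (e t), e' t⟫ ≥ -α (y t)`, and `-α` is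
positive on the negative reals. So `y` is strictly increasing on any interval where it is negative.
If `y` were negative at some time, then on the interval from the last preceding time with `y ≥ 0`
up to that time, `y` would increase from a nonnegative value to a negative one.
-/

open Set

theorem HasGradientAt.hasDerivAt_comp {F : Type*} [NormedAddCommGroup F] [InnerProductSpace ℝ F]
    [CompleteSpace F] {f : F → ℝ} {g : ℝ → F} {f' g' : F} {t : ℝ}
    (hf : HasGradientAt f f' (g t)) (hg : HasDerivAt g g' t) :
    HasDerivAt (fun s => f (g s)) (inner ℝ f' g') t := by
  simpa [InnerProductSpace.toDual_apply_apply, Function.comp_def] using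
    hf.hasFDerivAt.comp_hasDerivAt t hg

theorem exists_last_nonneg_of_neg {y : ℝ → ℝ} {a b : ℝ} (hab : a ≤ b)
    (hy : ContinuousOn y (Icc a b)) (ha : 0 ≤ y a) (hb : y b < 0) :
    ∃ s ∈ Ico a b, 0 ≤ y s ∧ ∀ τ ∈ Ioc s b, y τ < 0 := by
  set S := Icc a b ∩ y ⁻¹' Ici 0
  have hS : IsCompact S :=
    isCompact_Icc.of_isClosed_subset (hy.preimage_isClosed_of_isClosed isClosed_Icc isClosed_Ici)
      inter_subset_left
  obtain ⟨s, ⟨⟨has, hsb⟩, hys⟩, hs_max⟩ := hS.exists_isGreatest ⟨a, ⟨le_rfl, hab⟩, ha⟩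
  have hsb' : s < b := hsb.lt_of_ne (by rintro rfl; exact hb.not_ge hys)
  refine ⟨s, ⟨has, hsb'⟩, hys, fun τ hτ => ?_⟩
  by_contra! hyτ
  exact hτ.1.not_ge (hs_max ⟨⟨has.trans hτ.1.le, hτ.2⟩, hyτ⟩)

theorem nonneg_of_hasDerivAt_pos_of_neg {y y' : ℝ → ℝ} {a b : ℝ}
    (hy : ∀ t ∈ Icc a b, HasDerivAt y (y' t) t) (hpos : ∀ t ∈ Icc a b, y t < 0 → 0 < y' t)
    (ha : 0 ≤ y a) : ∀ t ∈ Icc a b, 0 ≤ y t := by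
  intro t ht
  by_contra! hyt
  have hsub : Icc a t ⊆ Icc a b := Icc_subset_Icc_right ht.2
  obtain ⟨s, ⟨has, hst⟩, hys, hneg⟩ :=
    exists_last_nonneg_of_neg ht.1 (fun τ hτ => (hy τ (hsub hτ)).continuousAt.continuousWithinAt) ha hyt
  have hsub' : Icc s t ⊆ Icc a b := (Icc_subset_Icc_left has).trans hsub
  have hmono : StrictMonoOn y (Icc s t) := by
    refine strictMonoOn_of_hasDerivWithinAt_pos (convex_Icc s t)
      (fun τ hτ => (hy τ (hsub' hτ)).continuousAt.continuousWithinAt) (f' := y')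
      (fun τ hτ => (hy τ (hsub' (interior_subset hτ))).hasDerivWithinAt) fun τ hτ => ?_
    rw [interior_Icc] at hτ
    exact hpos τ (hsub' (Ioo_subset_Icc_self hτ)) (hneg τ (Ioo_subset_Ioc_self hτ))
  have : y s < y t := hmono (left_mem_Icc.2 hst.le) (right_mem_Icc.2 hst.le) hst
  linarith

theorem cbf_safe_set_invariance_general
    (n : ℕ) (T : ℝ)
    (h : EuclideanSpace ℝ (Fin n) → ℝ)
    (hh : ContDiff ℝ 1 h)
    (e e' : ℝ → EuclideanSpace ℝ (Fin n))
    (he : ∀ t ∈ Set.Icc (0:ℝ) T, HasDerivAt e (e' t) t)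
    (α : ℝ → ℝ)
    (hα_mono : StrictMono α)
    (hα_zero : α 0 = 0)
    (hlie : ∀ t ∈ Set.Icc (0:ℝ) T,
      (inner ℝ (gradient h (e t)) (e' t) : ℝ) ≥ -α (h (e t)))
    (h0 : e 0 ∈ {x : EuclideanSpace ℝ (Fin n) | h x ≥ 0}) :
    ∀ t ∈ Set.Icc (0:ℝ) T, e t ∈ {x : EuclideanSpace ℝ (Fin n) | h x ≥ 0} := by
  have hderiv (t : ℝ) (ht : t ∈ Icc 0 T) :
      HasDerivAt (fun s => h (e s)) (inner ℝ (gradient h (e t)) (e' t)) t :=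
    ((hh.differentiable one_ne_zero) (e t)).hasGradientAt.hasDerivAt_comp (he t ht)
  refine nonneg_of_hasDerivAt_pos_of_neg hderiv (fun t ht hyt => ?_) h0
  have : α (h (e t)) < 0 := hα_zero ▸ hα_mono hyt
  linarith [hlie t ht]

/-- **Forward invariance of the CBF safe set (Proposition 1).**
Let `h : ℝⁿ → ℝ` be continuously differentiable with safe set `𝓔 = {e | h e ≥ 0}`,
let `e : [0, T] → ℝⁿ` be differentiable, and let `α` be a locally Lipschitz, strictly
increasing function with `α 0 = 0`. If `⟨∇h(e t), e' t⟩ ≥ -α (h (e t))` on `[0, T]` and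
`e 0 ∈ 𝓔`, then `e t ∈ 𝓔` for all `t ∈ [0, T]`. -/
theorem cbf_safe_set_invariance
    (n : ℕ) (T : ℝ) (hT : 0 < T)
    (h : EuclideanSpace ℝ (Fin n) → ℝ)
    (hh : ContDiff ℝ 1 h)
    (e e' : ℝ → EuclideanSpace ℝ (Fin n))
    (he : ∀ t ∈ Set.Icc (0:ℝ) T, HasDerivAt e (e' t) t)
    (α : ℝ → ℝ)
    (hα_lip : LocallyLipschitz α)
    (hα_mono : StrictMono α)
    (hα_zero : α 0 = 0)
    (hlie : ∀ t ∈ Set.Icc (0:ℝ) T,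
      (inner ℝ (gradient h (e t)) (e' t) : ℝ) ≥ -α (h (e t)))
    (h0 : e 0 ∈ {x : EuclideanSpace ℝ (Fin n) | h x ≥ 0}) :
    ∀ t ∈ Set.Icc (0:ℝ) T, e t ∈ {x : EuclideanSpace ℝ (Fin n) | h x ≥ 0} :=
  cbf_safe_set_invariance_general n T h hh e e' he α hα_mono hα_zero hlie h0
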